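/- Sub-shape of a frequent shape is frequent: under the additive-decomposition and nonnegativity assumptions on dist, if F = {s₁, ..., s_m} is a frequent shape (at least N sequences in T̂ within distance θ), then for every j ∈ {1, ..., m−1}, the length-2 sub-shape SP_j = (s_j, s_{j+1}) satisfies |{S ∈ T̂ : dist(SP_j, (S_j, S_{j+1})) ≤ θ}| ≥ N, where (S_j, S_{j+1}) denotes the corresponding contiguous sub-shape of S. -/
import Mathlib


/-- Sub-shape of a frequent shape is frequent.  Sequences of length `k` are modeled as
functions `Fin k → α`, with a length-indexed distance family `D` that is nonnegative and
decomposes additively over any prefix/suffix split.  If `F` is a frequent shape (at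
least `N` dataset sequences within distance `θ`), then for every `j` with `j + 2 ≤ m`,
the length-2 contiguous sub-shape `(F j, F (j+1))` is matched by at least `N` sequences
via the corresponding contiguous sub-shapes. -/
theorem stmt_4 {α : Type*} [DecidableEq α] (m : ℕ)
    (D : ∀ k : ℕ, (Fin k → α) → (Fin k → α) → ℝ)
    (hnonneg : ∀ k f g, 0 ≤ D k f g)
    (hdecomp : ∀ (k p : ℕ) (hp : p ≤ k) (S T : Fin k → α),
      D k S T =
        D p (fun i => S (Fin.castLE hp i)) (fun i => T (Fin.castLE hp i)) +
        D (k - p) (fun i => S ⟨p + i.1, by omega⟩) (fun i => T ⟨p + i.1, by omega⟩))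
    (Tds : Finset (Fin m → α)) (F : Fin m → α) (θ : ℝ) (N : ℕ)
    (hfreq : N ≤ (Tds.filter (fun S => D m F S ≤ θ)).card)
    (j : ℕ) (hj : j + 2 ≤ m) :
    N ≤ (Tds.filter (fun S =>
        D 2 (fun i => F ⟨j + i.1, by omega⟩) (fun i => S ⟨j + i.1, by omega⟩) ≤ θ)).card := by
  refine le_trans hfreq (Finset.card_le_card ?_)
  intro S hS
  simp only [Finset.mem_filter] at hS ⊢
  refine ⟨hS.1, ?_⟩
  have h1 := hdecomp m j (by omega) F S
  have h2 := hdecomp (m - j) 2 (by omega)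
      (fun i => F ⟨j + i.1, by omega⟩) (fun i => S ⟨j + i.1, by omega⟩)
  have h3 : D 2 (fun i => F ⟨j + i.1, by omega⟩) (fun i => S ⟨j + i.1, by omega⟩) =
      D 2 (fun i => (fun i : Fin (m - j) => F ⟨j + i.1, by omega⟩)
            (Fin.castLE (show 2 ≤ m - j by omega) i))
          (fun i => (fun i : Fin (m - j) => S ⟨j + i.1, by omega⟩)
            (Fin.castLE (show 2 ≤ m - j by omega) i)) := rfl
  rw [h3]
  have hds := hS.2
  rw [h1, h2] at hds
  linarith [hnonneg j (fun i => F (Fin.castLE (by omega) i))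
      (fun i => S (Fin.castLE (by omega) i)),
    hnonneg (m - j - 2)
      (fun i => (fun i : Fin (m - j) => F ⟨j + i.1, by omega⟩) ⟨2 + i.1, by omega⟩)
      (fun i => (fun i : Fin (m - j) => S ⟨j + i.1, by omega⟩) ⟨2 + i.1, by omega⟩)]
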